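/- Let (X,d) be a metric space with ℓ as above, and define β^×_u(x,y) := ℓ(u,x) - ℓ(u,y) for u ∈ X and formal points x=(a,a',s), y=(b,b',t). Define d^×(x,y) := sup_{u∈X} |β^×_u(x,y)|. Then d^× is symmetric, satisfies the triangle inequality, d^×(x,x)=0, and for x=(a,a',s), y=(a,a',t) on the same line, d^×(x,y) = |s-t|. Moreover for a,b ∈ X (viewed as degenerate points x=(a,a, 0), y=(b,b,0)), d^×(x,y) = d(a,b). -/
import Mathlib


/-- The double difference in a metric space. -/
noncomputable def doubleDiff {X : Type*} [MetricSpace X] (a a' b b' : X) : ℝ :=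
  (dist a b - dist a' b - dist a b' + dist a' b') / 2

/-- The Gromov product ⟨a|b⟩_c in a metric space. -/
noncomputable def gromovProd {X : Type*} [MetricSpace X] (a b c : X) : ℝ :=
  (dist a c + dist b c - dist a b) / 2

/-- A formal point of the symmetric join: a pair of points of X with a coordinate
in the interval [-⟨a'|x₀⟩_a, ⟨a|x₀⟩_{a'}]. -/
structure FormalPoint (X : Type*) [MetricSpace X] (x₀ : X) where
  a : X
  a' : X
  s : ℝ
  hs : s ∈ Set.Icc (-(gromovProd a' x₀ a)) (gromovProd a x₀ a')

/-- ℓ(u,x) := ⟨a|a'⟩_u + |s - ⟨a,a'|u,x₀⟩|. -/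
noncomputable def ellPt {X : Type*} [MetricSpace X] {x₀ : X}
    (u : X) (x : FormalPoint X x₀) : ℝ :=
  gromovProd x.a x.a' u + |x.s - doubleDiff x.a x.a' u x₀|

/-- d^×(x,y) := sup_{u∈X} |ℓ(u,x) - ℓ(u,y)|. -/
noncomputable def dcross {X : Type*} [MetricSpace X] {x₀ : X}
    (x y : FormalPoint X x₀) : ℝ :=
  ⨆ u : X, |ellPt u x - ellPt u y|

lemma ell_diff_bound {X : Type*} [MetricSpace X] {x₀ : X}
    (x y : FormalPoint X x₀) (u : X) :
    |ellPt u x - ellPt u y| ≤ 2 * (dist x.a y.a + dist x.a' y.a') + |x.s - y.s| := by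
  have h1 := abs_dist_sub_le x.a y.a u
  have h2 := abs_dist_sub_le x.a' y.a' u
  have h3 := abs_dist_sub_le x.a y.a x₀
  have h4 := abs_dist_sub_le x.a' y.a' x₀
  have h5 : |dist x.a x.a' - dist y.a y.a'| ≤ dist x.a y.a + dist x.a' y.a' := by
    rw [abs_le]
    have t1 := dist_triangle4 x.a y.a y.a' x.a'
    have t2 := dist_triangle4 y.a x.a x.a' y.a'
    have := dist_comm x.a y.a
    have := dist_comm x.a' y.a'
    constructor <;> linarith
  have h1' := abs_le.1 h1
  have h2' := abs_le.1 h2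
  have h3' := abs_le.1 h3
  have h4' := abs_le.1 h4
  have h5' := abs_le.1 h5
  have hP : |gromovProd x.a x.a' u - gromovProd y.a y.a' u| ≤
      dist x.a y.a + dist x.a' y.a' := by
    rw [gromovProd, gromovProd, abs_le]
    constructor <;> linarith [h1'.1, h1'.2, h2'.1, h2'.2, h5'.1, h5'.2]
  have hD : |doubleDiff x.a x.a' u x₀ - doubleDiff y.a y.a' u x₀| ≤
      dist x.a y.a + dist x.a' y.a' := by
    rw [doubleDiff, doubleDiff, abs_le]
    constructor <;> linarith [h1'.1, h1'.2, h2'.1, h2'.2, h3'.1, h3'.2, h4'.1, h4'.2]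
  have hA : |(|x.s - doubleDiff x.a x.a' u x₀|) - (|y.s - doubleDiff y.a y.a' u x₀|)| ≤
      |x.s - y.s| + |doubleDiff x.a x.a' u x₀ - doubleDiff y.a y.a' u x₀| := by
    refine le_trans (abs_abs_sub_abs_le_abs_sub _ _) ?_
    have : x.s - doubleDiff x.a x.a' u x₀ - (y.s - doubleDiff y.a y.a' u x₀)
        = (x.s - y.s) - (doubleDiff x.a x.a' u x₀ - doubleDiff y.a y.a' u x₀) := by ring
    rw [this]
    exact abs_sub _ _
  have key : |ellPt u x - ellPt u y| ≤ |gromovProd x.a x.a' u - gromovProd y.a y.a' u|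
      + |(|x.s - doubleDiff x.a x.a' u x₀|) - (|y.s - doubleDiff y.a y.a' u x₀|)| := by
    rw [ellPt, ellPt]
    have : gromovProd x.a x.a' u + |x.s - doubleDiff x.a x.a' u x₀|
        - (gromovProd y.a y.a' u + |y.s - doubleDiff y.a y.a' u x₀|)
        = (gromovProd x.a x.a' u - gromovProd y.a y.a' u)
          + ((|x.s - doubleDiff x.a x.a' u x₀|) - (|y.s - doubleDiff y.a y.a' u x₀|)) := by
      ring
    rw [this]
    exact abs_add_le _ _
  linarith

lemma dcross_bdd {X : Type*} [MetricSpace X] {x₀ : X} (x y : FormalPoint X x₀) :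
    BddAbove (Set.range fun u : X => |ellPt u x - ellPt u y|) := by
  refine ⟨2 * (dist x.a y.a + dist x.a' y.a') + |x.s - y.s|, ?_⟩
  rintro r ⟨u, rfl⟩
  exact ell_diff_bound x y u

theorem dcross_pseudometric {X : Type*} [MetricSpace X] (x₀ : X) :
    (∀ x y : FormalPoint X x₀, dcross x y = dcross y x) ∧
    (∀ x y z : FormalPoint X x₀, dcross x z ≤ dcross x y + dcross y z) ∧
    (∀ x : FormalPoint X x₀, dcross x x = 0) ∧
    (∀ (a a' : X) (s t : ℝ)
        (hs : s ∈ Set.Icc (-(gromovProd a' x₀ a)) (gromovProd a x₀ a'))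
        (ht : t ∈ Set.Icc (-(gromovProd a' x₀ a)) (gromovProd a x₀ a')),
        dcross (FormalPoint.mk a a' s hs) (FormalPoint.mk a a' t ht) = |s - t|) ∧
    (∀ (a b : X)
        (ha : (0 : ℝ) ∈ Set.Icc (-(gromovProd a x₀ a)) (gromovProd a x₀ a))
        (hb : (0 : ℝ) ∈ Set.Icc (-(gromovProd b x₀ b)) (gromovProd b x₀ b)),
        dcross (FormalPoint.mk a a 0 ha) (FormalPoint.mk b b 0 hb) = dist a b) := by
  haveI : Nonempty X := ⟨x₀⟩
  refine ⟨?_, ?_, ?_, ?_, ?_⟩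
  · intro x y
    simp only [dcross, abs_sub_comm]
  · intro x y z
    refine ciSup_le fun u => ?_
    have h1 : |ellPt u x - ellPt u y| ≤ dcross x y := le_ciSup (dcross_bdd x y) u
    have h2 : |ellPt u y - ellPt u z| ≤ dcross y z := le_ciSup (dcross_bdd y z) u
    have : |ellPt u x - ellPt u z| ≤ |ellPt u x - ellPt u y| + |ellPt u y - ellPt u z| :=
      abs_sub_le _ _ _
    linarith
  · intro x
    simp [dcross]
  · intro a a' s t hs ht
    apply le_antisymm
    · refine ciSup_le fun u => ?_
      simp only [ellPt]
      have : gromovProd a a' u + |s - doubleDiff a a' u x₀|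
          - (gromovProd a a' u + |t - doubleDiff a a' u x₀|)
          = |s - doubleDiff a a' u x₀| - |t - doubleDiff a a' u x₀| := by ring
      rw [this]
      refine le_trans (abs_abs_sub_abs_le_abs_sub _ _) ?_
      have : s - doubleDiff a a' u x₀ - (t - doubleDiff a a' u x₀) = s - t := by ring
      rw [this]
    · have hDa : doubleDiff a a' a x₀ = -(gromovProd a' x₀ a) := by
        simp [doubleDiff, gromovProd, dist_comm]
        ring
      have hval : |ellPt a (FormalPoint.mk a a' s hs) - ellPt a (FormalPoint.mk a a' t ht)|
          = |s - t| := by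
        simp only [ellPt, hDa]
        have hs' : s - -(gromovProd a' x₀ a) ≥ 0 := by linarith [hs.1]
        have ht' : t - -(gromovProd a' x₀ a) ≥ 0 := by linarith [ht.1]
        rw [abs_of_nonneg hs', abs_of_nonneg ht']
        congr 1
        ring
      calc |s - t| = |ellPt a (FormalPoint.mk a a' s hs) - ellPt a (FormalPoint.mk a a' t ht)| :=
            hval.symm
        _ ≤ _ := le_ciSup (dcross_bdd _ _) a
  · intro a b ha hb
    have hell : ∀ (c : X) (hc : (0:ℝ) ∈ Set.Icc (-(gromovProd c x₀ c)) (gromovProd c x₀ c))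
        (u : X), ellPt u (FormalPoint.mk c c 0 hc) = dist c u := by
      intro c hc u
      simp [ellPt, gromovProd, doubleDiff]
    apply le_antisymm
    · refine ciSup_le fun u => ?_
      rw [hell a ha u, hell b hb u]
      exact abs_dist_sub_le a b u
    · have : dist a b = |ellPt b (FormalPoint.mk a a 0 ha) - ellPt b (FormalPoint.mk b b 0 hb)| := by
        rw [hell a ha b, hell b hb b]
        simp [abs_of_nonneg dist_nonneg]
      rw [this]
      exact le_ciSup (dcross_bdd _ _) b
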